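/- arXiv:2507.20071 — 3 statements merged into one kernel-verified Lean document; each statement's English description precedes it below -/
import Mathlib

section
/- Let Q, Q_d be unit quaternions and let Q̃ = Q_d⁻¹ ⊙ Q = (q̃, q̃₀) be the quaternion error. Define q̄ = (q̃₂, −q̃₁, −q̃₀)ᵀ and z_I = (0,0,1)ᵀ. Then (R(Q)ᵀ − R(Q_d)ᵀ) z_I = 2 R(Q)ᵀ [q̄]× q̃. -/
set_option maxHeartbeats 2000000

open Matrix

private lemma fin3_mk2 (h : (2:ℕ) < 3) : (⟨2, h⟩ : Fin 3) = 2 := rfl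
private lemma fin3_mk1 (h : (1:ℕ) < 3) : (⟨1, h⟩ : Fin 3) = 1 := rfl
private lemma fin3_mk0 (h : (0:ℕ) < 3) : (⟨0, h⟩ : Fin 3) = 0 := rfl

def skew (x : Fin 3 → ℝ) : Matrix (Fin 3) (Fin 3) ℝ :=
  !![0, -x 2, x 1; x 2, 0, -x 0; -x 1, x 0, 0]

def qprod (Q1 Q2 : (Fin 3 → ℝ) × ℝ) : (Fin 3 → ℝ) × ℝ :=
  (Q1.2 • Q2.1 + Q2.2 • Q1.1 + (skew Q1.1).mulVec Q2.1,
   Q1.2 * Q2.2 - Q1.1 ⬝ᵥ Q2.1)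

def Rmat (q : Fin 3 → ℝ) (q0 : ℝ) : Matrix (Fin 3) (Fin 3) ℝ :=
  (q0 ^ 2 - (q 0 ^ 2 + q 1 ^ 2 + q 2 ^ 2)) • (1 : Matrix (Fin 3) (Fin 3) ℝ)
    + (2 : ℝ) • Matrix.of (fun i j => q i * q j)
    - (2 * q0) • skew q

theorem attitude_error_identity (q : Fin 3 → ℝ) (q0 : ℝ) (qd : Fin 3 → ℝ) (qd0 : ℝ)
    (hq : q 0 ^ 2 + q 1 ^ 2 + q 2 ^ 2 + q0 ^ 2 = 1)
    (hqd : qd 0 ^ 2 + qd 1 ^ 2 + qd 2 ^ 2 + qd0 ^ 2 = 1)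
    (qt : Fin 3 → ℝ) (qt0 : ℝ)
    (hqt : (qt, qt0) = qprod (-qd, qd0) (q, q0))
    (qbar : Fin 3 → ℝ) (hqbar : qbar = ![qt 1, -qt 0, -qt0])
    (zI : Fin 3 → ℝ) (hzI : zI = ![0, 0, 1]) :
    ((Rmat q q0)ᵀ - (Rmat qd qd0)ᵀ).mulVec zI
      = (2 : ℝ) • (Rmat q q0)ᵀ.mulVec ((skew qbar).mulVec qt) := by
  have h1 : qt = (qprod (-qd, qd0) (q, q0)).1 := congrArg Prod.fst hqt
  have h2 : qt0 = (qprod (-qd, qd0) (q, q0)).2 := congrArg Prod.snd hqt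
  subst hqbar hzI
  have e0 : qt 0 = qd0 * q 0 - qd 0 * q0 + qd 2 * q 1 - qd 1 * q 2 := by
    rw [h1]
    simp [qprod, skew, mulVec, dotProduct, Fin.sum_univ_three, Matrix.vecHead,
      Matrix.vecTail, Pi.smul_apply, smul_eq_mul]
    ring
  have e1 : qt 1 = qd0 * q 1 - qd 1 * q0 + qd 0 * q 2 - qd 2 * q 0 := by
    rw [h1]
    simp [qprod, skew, mulVec, dotProduct, Fin.sum_univ_three, Matrix.vecHead,
      Matrix.vecTail, Pi.smul_apply, smul_eq_mul]
    ring
  have e2 : qt 2 = qd0 * q 2 - qd 2 * q0 + qd 1 * q 0 - qd 0 * q 1 := by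
    rw [h1]
    simp [qprod, skew, mulVec, dotProduct, Fin.sum_univ_three, Matrix.vecHead,
      Matrix.vecTail, Pi.smul_apply, smul_eq_mul]
    ring
  have e3 : qt0 = qd0 * q0 + (qd 0 * q 0 + qd 1 * q 1 + qd 2 * q 2) := by
    rw [h2]; simp [qprod, dotProduct, Fin.sum_univ_three]; ring
  clear h1 h2 hqt
  funext i
  fin_cases i <;> simp only [fin3_mk0, fin3_mk1, fin3_mk2]
  · simp only [Rmat, skew, Matrix.sub_apply, Matrix.transpose_apply, mulVec,
      dotProduct, Fin.sum_univ_three, Matrix.add_apply, Matrix.smul_apply,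
      Matrix.one_apply, Matrix.of_apply, Pi.smul_apply, smul_eq_mul,
      Matrix.cons_val_zero, Matrix.cons_val_one, Matrix.head_cons,
      Matrix.cons_val_two, Matrix.tail_cons, e0, e1, e2, e3,
      Matrix.cons_val', Matrix.cons_val_fin_one, Matrix.empty_val',
      Fin.isValue, Matrix.vecHead, Matrix.vecTail]
    norm_num [Fin.ext_iff]
    linear_combination ((0:ℝ) + (2:ℝ)*qd 1*qd0 + (2:ℝ)*qd 0*qd 2 + (2:ℝ)*q0*q0*qd 1*qd0 + (2:ℝ)*q0*q0*qd 0*qd 2 + (2:ℝ)*q 2*q 2*qd 1*qd0 + (2:ℝ)*q 2*q 2*qd 0*qd 2 - (2:ℝ)*q 1*q0*qd0*qd0 - (2:ℝ)*q 1*q0*qd 2*qd 2 - (2:ℝ)*q 1*q0*qd 1*qd 1 - (2:ℝ)*q 1*q0*qd 0*qd 0 + (2:ℝ)*q 1*q 1*qd 1*qd0 + (2:ℝ)*q 1*q 1*qd 0*qd 2 - (2:ℝ)*q 0*q 2*qd0*qd0 - (2:ℝ)*q 0*q 2*qd 2*qd 2 - (2:ℝ)*q 0*q 2*qd 1*qd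 1 - (2:ℝ)*q 0*q 2*qd 0*qd 0 + (2:ℝ)*q 0*q 0*qd 1*qd0 + (2:ℝ)*q 0*q 0*qd 0*qd 2) * hq + ((0:ℝ) - (2:ℝ)*q 1*q0 - (2:ℝ)*q 0*q 2) * hqd
  · simp only [Rmat, skew, Matrix.sub_apply, Matrix.transpose_apply, mulVec,
      dotProduct, Fin.sum_univ_three, Matrix.add_apply, Matrix.smul_apply,
      Matrix.one_apply, Matrix.of_apply, Pi.smul_apply, smul_eq_mul,
      Matrix.cons_val_zero, Matrix.cons_val_one, Matrix.head_cons,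
      Matrix.cons_val_two, Matrix.tail_cons, e0, e1, e2, e3,
      Matrix.cons_val', Matrix.cons_val_fin_one, Matrix.empty_val',
      Fin.isValue, Matrix.vecHead, Matrix.vecTail]
    norm_num [Fin.ext_iff]
    linear_combination ((0:ℝ) + (2:ℝ)*qd 1*qd 2 - (2:ℝ)*qd 0*qd0 + (2:ℝ)*q0*q0*qd 1*qd 2 - (2:ℝ)*q0*q0*qd 0*qd0 + (2:ℝ)*q 2*q 2*qd 1*qd 2 - (2:ℝ)*q 2*q 2*qd 0*qd0 - (2:ℝ)*q 1*q 2*qd0*qd0 - (2:ℝ)*q 1*q 2*qd 2*qd 2 - (2:ℝ)*q 1*q 2*qd 1*qd 1 - (2:ℝ)*q 1*q 2*qd 0*qd 0 + (2:ℝ)*q 1*q 1*qd 1*qd 2 - (2:ℝ)*q 1*q 1*qd 0*qd0 + (2:ℝ)*q 0*q0*qd0*qd0 + (2:ℝ)*q 0*q0*qd 2*qd 2 + (2:ℝ)*q 0*q0*qd 1*qd 1 + (2:ℝ)*q 0*q0*qd 0*qd 0 + (2:ℝ)*q 0*q 0*qd 1*qd 2 - (2:ℝ)*q 0*q 0*qd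 0*qd0) * hq + ((0:ℝ) - (2:ℝ)*q 1*q 2 + (2:ℝ)*q 0*q0) * hqd
  · simp only [Rmat, skew, Matrix.sub_apply, Matrix.transpose_apply, mulVec,
      dotProduct, Fin.sum_univ_three, Matrix.add_apply, Matrix.smul_apply,
      Matrix.one_apply, Matrix.of_apply, Pi.smul_apply, smul_eq_mul,
      Matrix.cons_val_zero, Matrix.cons_val_one, Matrix.head_cons,
      Matrix.cons_val_two, Matrix.tail_cons, e0, e1, e2, e3,
      Matrix.cons_val', Matrix.cons_val_fin_one, Matrix.empty_val',
      Fin.isValue, Matrix.vecHead, Matrix.vecTail]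
    norm_num [Fin.ext_iff]
    linear_combination ((1:ℝ) - (2:ℝ)*qd 1*qd 1 - (2:ℝ)*qd 0*qd 0 - (2:ℝ)*q0*q0*qd 1*qd 1 - (2:ℝ)*q0*q0*qd 0*qd 0 - (2:ℝ)*q 2*q 2*qd 1*qd 1 - (2:ℝ)*q 2*q 2*qd 0*qd 0 + (2:ℝ)*q 1*q 1*qd0*qd0 + (2:ℝ)*q 1*q 1*qd 2*qd 2 + (2:ℝ)*q 0*q 0*qd0*qd0 + (2:ℝ)*q 0*q 0*qd 2*qd 2) * hq + (- (1:ℝ) + (2:ℝ)*q 1*q 1 + (2:ℝ)*q 0*q 0) * hqd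
end

section
/- Let p : [0,∞) → ℝ be continuously differentiable satisfying ṗ(t) = −k |p(t)|^β sgn(p(t)) with k > 0 and β ∈ (0,1). Then p(t) = 0 for all t ≥ |p(0)|^{1−β}/(k(1−β)). -/
/-!
Along a solution `p * ṗ = -k |p|^(1+β) ≤ 0`, so `p²` is nonincreasing and `p` stays at zero
once it gets there. While `p ≠ 0`, `|p|^(1-β)` decreases with constant slope `-(1-β) k`, so `p`
must vanish by the settling time `|p 0|^(1-β) / (k (1-β))`.
-/

open Set

namespace Real

lemma sign_eq_coe_signType_sign (x : ℝ) : Real.sign x = (SignType.sign x : ℝ) := by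
  rcases lt_trichotomy x 0 with hx | rfl | hx
  · simp [sign_of_neg hx, hx]
  · simp
  · simp [sign_of_pos hx, hx]

lemma sign_mul_self_eq_abs (x : ℝ) : Real.sign x * x = |x| := by
  rcases lt_trichotomy x 0 with hx | rfl | hx
  · rw [sign_of_neg hx, abs_of_neg hx, neg_one_mul]
  · simp
  · rw [sign_of_pos hx, abs_of_pos hx, one_mul]

lemma sign_mul_sign_of_ne_zero {x : ℝ} (hx : x ≠ 0) : Real.sign x * Real.sign x = 1 := by
  rcases sign_apply_eq_of_ne_zero x hx with h | h <;> rw [h] <;> norm_num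

end Real

lemma antitoneOn_sq_of_mul_deriv_nonpos {f f' : ℝ → ℝ} {a : ℝ}
    (hf : ∀ t ≥ a, HasDerivAt f (f' t) t) (hff' : ∀ t > a, f t * f' t ≤ 0) :
    AntitoneOn (fun t => f t ^ 2) (Ici a) := by
  have hsq : ∀ t ≥ a, HasDerivAt (fun t => f t ^ 2) (2 * f t * f' t) t := fun t ht => by
    simpa using (hf t ht).fun_pow 2
  refine antitoneOn_of_hasDerivWithinAt_nonpos (convex_Ici a)
    (fun t ht => (hsq t ht).continuousAt.continuousWithinAt)
    (fun t ht => (hsq t (interior_subset ht)).hasDerivWithinAt) fun t ht => ?_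
  rw [interior_Ici] at ht
  linarith [hff' t ht]

lemma eq_zero_of_mul_deriv_nonpos {f f' : ℝ → ℝ} {a : ℝ}
    (hf : ∀ t ≥ a, HasDerivAt f (f' t) t) (hff' : ∀ t > a, f t * f' t ≤ 0) (ha : f a = 0) :
    ∀ t ≥ a, f t = 0 := fun t ht => by
  have := antitoneOn_sq_of_mul_deriv_nonpos hf hff' (mem_Ici.2 le_rfl) (mem_Ici.2 ht) ht
  simp only [ha] at this
  exact pow_eq_zero_iff two_ne_zero |>.1 (le_antisymm (by simpa using this) (sq_nonneg _))

noncomputable def settlingTime (k β x : ℝ) : ℝ := |x| ^ (1 - β) / (k * (1 - β))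

section FiniteTimeDecay

variable {k β : ℝ} {p : ℝ → ℝ}

lemma mul_neg_rpow_mul_sign_nonpos (hk : 0 ≤ k) (x : ℝ) :
    x * (-k * |x| ^ β * Real.sign x) ≤ 0 := by
  have : x * (-k * |x| ^ β * Real.sign x) = -(k * |x| ^ β * |x|) := by
    rw [← Real.sign_mul_self_eq_abs]; ring
  rw [this, neg_nonpos]
  positivity

lemma hasDerivAt_abs_rpow_one_sub {t : ℝ}
    (hp : HasDerivAt p (-k * |p t| ^ β * Real.sign (p t)) t) (hpt : p t ≠ 0) :
    HasDerivAt (fun s => |p s| ^ (1 - β)) (-((1 - β) * k)) t := by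
  have habs : HasDerivAt (fun s => |p s|)
      (Real.sign (p t) * (-k * |p t| ^ β * Real.sign (p t))) t := by
    rw [Real.sign_eq_coe_signType_sign] at hp ⊢
    exact (hasDerivAt_abs hpt).comp t hp
  convert habs.rpow_const (p := 1 - β) (Or.inl (abs_ne_zero.2 hpt)) using 1
  have hpow : |p t| ^ β * |p t| ^ (1 - β - 1) = 1 := by
    rw [← Real.rpow_add (abs_pos.2 hpt)]
    norm_num
  linear_combination (1 - β) * k * (|p t| ^ β * |p t| ^ (1 - β - 1)) *
    Real.sign_mul_sign_of_ne_zero hpt + (1 - β) * k * hpow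

lemma abs_rpow_one_sub_eq_of_ne_zero {a b : ℝ} (hab : a ≤ b)
    (hp : ∀ t ∈ Icc a b, HasDerivAt p (-k * |p t| ^ β * Real.sign (p t)) t)
    (hne : ∀ t ∈ Icc a b, p t ≠ 0) :
    |p b| ^ (1 - β) = |p a| ^ (1 - β) - (1 - β) * k * (b - a) := by
  have hφ : ∀ t ∈ Icc a b, HasDerivAt (fun s => |p s| ^ (1 - β) + (1 - β) * k * s) 0 t :=
    fun t ht => by
      simpa using (hasDerivAt_abs_rpow_one_sub (hp t ht) (hne t ht)).fun_add
        ((hasDerivAt_id t).const_mul ((1 - β) * k))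
  have := constant_of_has_deriv_right_zero
    (fun t ht => (hφ t ht).continuousAt.continuousWithinAt)
    (fun t ht => (hφ t (Ico_subset_Icc_self ht)).hasDerivWithinAt) b (right_mem_Icc.2 hab)
  linarith

lemma exists_eq_zero_le_settlingTime (hk : 0 < k) (hβ : β < 1)
    (hp : ∀ t ≥ 0, HasDerivAt p (-k * |p t| ^ β * Real.sign (p t)) t) :
    ∃ t₀ ∈ Icc 0 (settlingTime k β (p 0)), p t₀ = 0 := by
  set T := settlingTime k β (p 0)
  have hkβ : 0 < k * (1 - β) := mul_pos hk (sub_pos.2 hβ)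
  have hT : 0 ≤ T := by unfold T settlingTime; positivity
  by_contra! hne
  have hdecay := abs_rpow_one_sub_eq_of_ne_zero hT (fun t ht => hp t ht.1) hne
  have hreach : (1 - β) * k * (T - 0) = |p 0| ^ (1 - β) := by
    rw [sub_zero, mul_comm (1 - β) k]
    exact mul_div_cancel₀ _ hkβ.ne'
  have : 0 < |p T| ^ (1 - β) := Real.rpow_pos_of_pos (abs_pos.2 (hne T (right_mem_Icc.2 hT))) _
  linarith

end FiniteTimeDecay

theorem finite_time_convergence_of_scalar_ode_general
    (k β : ℝ) (hk : 0 < k) (hβ : β ∈ Set.Ioo (0 : ℝ) 1)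
    (p : ℝ → ℝ) (p' : ℝ → ℝ)
    (hderiv : ∀ t ≥ (0 : ℝ), HasDerivAt p (p' t) t)
    (hode : ∀ t ≥ (0 : ℝ), p' t = -k * |p t| ^ β * Real.sign (p t)) :
    ∀ t ≥ |p 0| ^ (1 - β) / (k * (1 - β)), p t = 0 := by
  have hp : ∀ t ≥ 0, HasDerivAt p (-k * |p t| ^ β * Real.sign (p t)) t :=
    fun t ht => hode t ht ▸ hderiv t ht
  obtain ⟨t₀, ht₀, hpt₀⟩ := exists_eq_zero_le_settlingTime hk hβ.2 hp
  intro t ht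
  exact eq_zero_of_mul_deriv_nonpos (fun s hs => hp s (ht₀.1.trans hs))
    (fun s _ => mul_neg_rpow_mul_sign_nonpos hk.le (p s)) hpt₀ t (ht₀.2.trans ht)

theorem finite_time_convergence_of_scalar_ode
    (k β : ℝ) (hk : 0 < k) (hβ : β ∈ Set.Ioo (0 : ℝ) 1)
    (p : ℝ → ℝ) (p' : ℝ → ℝ)
    (hderiv : ∀ t ≥ (0 : ℝ), HasDerivAt p (p' t) t)
    (hcont : ContinuousOn p' (Set.Ici 0))
    (hode : ∀ t ≥ (0 : ℝ), p' t = -k * |p t| ^ β * Real.sign (p t)) :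
    ∀ t ≥ |p 0| ^ (1 - β) / (k * (1 - β)), p t = 0 :=
  finite_time_convergence_of_scalar_ode_general k β hk hβ p p' hderiv hode
end

section
/- With F, 𝒯, Q_d = (q_d, q_{d0}) as defined from the thrust extraction map, the associated rotation matrix satisfies R(Q_d)ᵀ z_I = (m/𝒯)(g z_I − F), i.e., the extracted quaternion realizes the virtual control: g z_I − (𝒯/m) R(Q_d)ᵀ z_I = F. -/
open Matrix

/-!
`R(Q)ᵀ z_I` is the third row of `R(Q)`. For a unit vector `u` and a quaternion with vector part
`(-u₁, u₀, 0) / (2 q₀)` and `2 q₀² = 1 + u₂` (the half-angle rotation about the axis `z_I × u`),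
this row is exactly `u`, because `u₀² + u₁² = (1 - u₂)(1 + u₂)`. The extracted quaternion is this
construction applied to the unit vector `u = (m/𝒯)(g z_I - F)`.
-/

theorem Rmat_transpose_mulVec_e3 (q : Fin 3 → ℝ) (q0 : ℝ) :
    (Rmat q q0)ᵀ *ᵥ ![0, 0, 1] =
      ![2 * (q 2 * q 0 + q0 * q 1), 2 * (q 2 * q 1 - q0 * q 0),
        q0 ^ 2 - q 0 ^ 2 - q 1 ^ 2 + q 2 ^ 2] := by
  ext i
  fin_cases i <;>
    simp [Rmat, skew, mulVec, dotProduct, Fin.sum_univ_three, one_apply] <;> ring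

theorem Rmat_halfAngle_transpose_mulVec_e3 (u : Fin 3 → ℝ)
    (hu : u 0 ^ 2 + u 1 ^ 2 + u 2 ^ 2 = 1) (w : ℝ) (hw : 2 * w ^ 2 = 1 + u 2) (hw0 : w ≠ 0) :
    (Rmat ![-u 1 / (2 * w), u 0 / (2 * w), 0] w)ᵀ *ᵥ ![0, 0, 1] = u := by
  rw [Rmat_transpose_mulVec_e3]
  ext i
  fin_cases i <;> simp <;> field_simp
  linear_combination (2 * w ^ 2 + 1 - u 2) * hw - hu

theorem thrust_extraction_realizes_virtual_control_general
    (g m fx fy fz : ℝ) (hm : 0 < m) (hfz : fz < g)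
    (T : ℝ) (hT : T = m * Real.sqrt (fx ^ 2 + fy ^ 2 + (g - fz) ^ 2))
    (qd0 : ℝ) (hqd0 : qd0 = Real.sqrt (m * (g - fz) / (2 * T) + 1 / 2))
    (qd : Fin 3 → ℝ)
    (hqd : qd = ![m * fy / (2 * T * qd0), -(m * fx) / (2 * T * qd0), 0])
    (zI : Fin 3 → ℝ) (hzI : zI = ![0, 0, 1]) :
    (Rmat qd qd0)ᵀ.mulVec zI = (m / T) • ![-fx, -fy, g - fz] ∧
    (g • zI - (T / m) • (Rmat qd qd0)ᵀ.mulVec zI) = ![fx, fy, fz] := by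
  have hS : 0 < fx ^ 2 + fy ^ 2 + (g - fz) ^ 2 := by nlinarith [sq_nonneg fx, sq_nonneg fy]
  have hT0 : 0 < T := hT ▸ mul_pos hm (Real.sqrt_pos.mpr hS)
  have hT2 : T ^ 2 = m ^ 2 * (fx ^ 2 + fy ^ 2 + (g - fz) ^ 2) := by
    rw [hT, mul_pow, Real.sq_sqrt hS.le]
  have harg : 0 < m * (g - fz) / (2 * T) + 1 / 2 := by have := sub_pos.mpr hfz; positivity
  have hq0sq : qd0 ^ 2 = m * (g - fz) / (2 * T) + 1 / 2 := hqd0 ▸ Real.sq_sqrt harg.le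
  have hq0 : qd0 ≠ 0 := hqd0 ▸ (Real.sqrt_pos.mpr harg).ne'
  set u : Fin 3 → ℝ := (m / T) • ![-fx, -fy, g - fz]
  have hu_unit : u 0 ^ 2 + u 1 ^ 2 + u 2 ^ 2 = 1 := by
    simp only [u, Pi.smul_apply, smul_eq_mul, cons_val_zero, cons_val_one, cons_val_two,
      tail_cons, head_cons]
    field_simp
    linear_combination -hT2
  have hw : 2 * qd0 ^ 2 = 1 + u 2 := by
    rw [hq0sq]
    simp only [u, Pi.smul_apply, smul_eq_mul, cons_val_two, tail_cons, head_cons]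
    field_simp
    ring
  have hqd_u : qd = ![-u 1 / (2 * qd0), u 0 / (2 * qd0), 0] := by
    rw [hqd]; ext i; fin_cases i <;> simp [u] <;> field_simp
  have hR : (Rmat qd qd0)ᵀ *ᵥ zI = u := by
    rw [hzI, hqd_u, Rmat_halfAngle_transpose_mulVec_e3 u hu_unit qd0 hw hq0]
  refine ⟨hR, ?_⟩
  have hTm : T / m * (m / T) = 1 := by field_simp
  rw [hR, smul_smul, hTm, one_smul, hzI]
  ext i; fin_cases i <;> simp

theorem thrust_extraction_realizes_virtual_control
    (g m fx fy fz : ℝ) (hg : 0 < g) (hm : 0 < m) (hfz : fz < g)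
    (T : ℝ) (hT : T = m * Real.sqrt (fx ^ 2 + fy ^ 2 + (g - fz) ^ 2))
    (qd0 : ℝ) (hqd0 : qd0 = Real.sqrt (m * (g - fz) / (2 * T) + 1 / 2))
    (qd : Fin 3 → ℝ)
    (hqd : qd = ![m * fy / (2 * T * qd0), -(m * fx) / (2 * T * qd0), 0])
    (zI : Fin 3 → ℝ) (hzI : zI = ![0, 0, 1]) :
    (Rmat qd qd0)ᵀ.mulVec zI = (m / T) • ![-fx, -fy, g - fz] ∧
    (g • zI - (T / m) • (Rmat qd qd0)ᵀ.mulVec zI) = ![fx, fy, fz] :=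
  thrust_extraction_realizes_virtual_control_general g m fx fy fz hm hfz T hT qd0 hqd0 qd hqd zI hzI
end
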